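/- Spectral resolution of 𝕂*: for every f ∈ W*, the function F : ℝ → ℝ defined by F(t) = ⟨f, E_{min(max(t,−b),b)} f⟩_{W*} is real-valued, nondecreasing and right-continuous, with F ≡ 0 on (−∞, −b] and F ≡ ‖f‖²_{W*} on [b, ∞); moreover its Lebesgue–Stieltjes measure μ_F satisfies ∫_ℝ t dμ_F(t) = ⟨f, 𝕂*f⟩_{W*} (and μ_F(ℝ) = ‖f‖²_{W*}). -/

import Mathlib

open Real Filter Topology Set MeasureTheory

/-- The weight `p₁`. -/
noncomputable def p1 (θ₀ : ℝ) (s : ℝ) : ℝ :=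
  if s = 0 then θ₀ * (π - θ₀) / π
  else Real.sinh (s * θ₀) * Real.sinh (s * (π - θ₀)) / (s * Real.sinh (s * π))

/-- The weight `p₂`. -/
noncomputable def p2 (θ₀ : ℝ) (s : ℝ) : ℝ :=
  Real.cosh (s * θ₀) * Real.cosh (s * (π - θ₀)) / (s * Real.sinh (s * π))

/-- The symbol `η`. -/
noncomputable def eta (θ₀ : ℝ) (s : ℝ) : ℝ :=
  if s = 0 then 1 / 2 - θ₀ / π
  else Real.sinh (s * (π - 2 * θ₀)) / (2 * Real.sinh (s * π))

/-- The measure `p₁(s) ds`. -/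
noncomputable def mu1 (θ₀ : ℝ) : Measure ℝ :=
  (volume : Measure ℝ).withDensity fun s => ENNReal.ofReal (p1 θ₀ s)

/-- The measure `p₂(s) ds`. -/
noncomputable def mu2 (θ₀ : ℝ) : Measure ℝ :=
  (volume : Measure ℝ).withDensity fun s => ENNReal.ofReal (p2 θ₀ s)

/-!
`𝕂*` acts by multiplication with `η` on the first component and with `-η` on the second, so its
spectral measure at `f` is the image `μ` of the energy measures `½ p₁ |f₁|² ds` and
`½ p₂ |f₂|² ds` under `η` and `-η`. The symbol `η` is even, positive, and strictly decreasing on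
`[0, ∞)` from `η 0 = b` (because `y ↦ sinh y / y` and `y ↦ y coth y` increase), so for
`0 < u ≤ b` the sets `{η ≤ u}` and `{u ≤ η}` are, up to the null endpoints `±σ u`, the
complement of `(-σ u, σ u]` and that interval itself. Hence `F t = μ (-∞, t]`: `F` is the
distribution function of a finite measure, which gives monotonicity, right continuity and
`μ_F = μ`, and the first moment of `μ` is `∫ η d(½ p₁|f₁|²) - ∫ η d(½ p₂|f₂|²) = ⟨f, 𝕂* f⟩`.
-/

lemma sinh_lt_mul_cosh {y : ℝ} (hy : 0 < y) : sinh y < y * cosh y := by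
  have hmono : StrictMonoOn (fun y => y * cosh y - sinh y) (Ici 0) :=
    strictMonoOn_of_hasDerivWithinAt_pos (convex_Ici 0) (by fun_prop)
      (fun x _ => (((hasDerivAt_id x).mul (hasDerivAt_cosh x)).sub
        (hasDerivAt_sinh x)).hasDerivWithinAt)
      (fun x hx => by
        rw [interior_Ici, mem_Ioi] at hx
        have := sinh_pos_iff.2 hx
        simp only [id, one_mul]
        nlinarith)
  simpa using hmono self_mem_Ici hy.le hy

lemma strictMonoOn_sinh_div_self : StrictMonoOn (fun y => sinh y / y) (Ioi 0) :=
  strictMonoOn_of_hasDerivWithinAt_pos (convex_Ioi 0)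
    (fun y hy => ((continuous_sinh.continuousAt).div continuousAt_id
      (ne_of_gt hy)).continuousWithinAt)
    (fun y hy => ((hasDerivAt_sinh y).div (hasDerivAt_id y)
      (ne_of_gt (interior_subset hy))).hasDerivWithinAt)
    (fun y hy => by
      rw [interior_Ioi, mem_Ioi] at hy
      have := sinh_lt_mul_cosh hy
      simp only [id, mul_one]
      exact div_pos (by linarith) (pow_pos hy 2))

lemma strictMonoOn_mul_cosh_div_sinh : StrictMonoOn (fun y => y * cosh y / sinh y) (Ioi 0) :=
  strictMonoOn_of_hasDerivWithinAt_pos (convex_Ioi 0)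
    (fun y hy => ((continuousAt_id.mul continuous_cosh.continuousAt).div
      continuous_sinh.continuousAt (sinh_pos_iff.2 hy).ne').continuousWithinAt)
    (fun y hy => (((hasDerivAt_id y).mul (hasDerivAt_cosh y)).div (hasDerivAt_sinh y)
      (sinh_pos_iff.2 (interior_subset hy)).ne').hasDerivWithinAt)
    (fun y hy => by
      rw [interior_Ioi, mem_Ioi] at hy
      have h2y : 2 * y < sinh (2 * y) := self_lt_sinh_iff.2 (by linarith)
      rw [sinh_two_mul] at h2y
      have := cosh_sq_sub_sinh_sq y
      simp only [Pi.mul_apply, id, one_mul]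
      exact div_pos (by nlinarith) (pow_pos (sinh_pos_iff.2 hy) 2))

lemma strictAntiOn_sinh_mul_div_sinh_mul {a b : ℝ} (ha : 0 < a) (hab : a < b) :
    StrictAntiOn (fun s => sinh (s * a) / sinh (s * b)) (Ioi 0) := by
  have hb : 0 < b := ha.trans hab
  have hsinh : ∀ {s c : ℝ}, 0 < s → 0 < c → 0 < sinh (s * c) :=
    fun hs hc => sinh_pos_iff.2 (mul_pos hs hc)
  refine strictAntiOn_of_hasDerivWithinAt_neg (convex_Ioi 0)
    (fun s hs => ((continuous_sinh.comp (continuous_mul_const a)).continuousAt.div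
      (continuous_sinh.comp (continuous_mul_const b)).continuousAt
      (hsinh hs hb).ne').continuousWithinAt)
    (fun s hs => (((hasDerivAt_mul_const a).sinh).div (hasDerivAt_mul_const b).sinh
      (hsinh (interior_subset hs) hb).ne').hasDerivWithinAt)
    (fun s hs => ?_)
  rw [interior_Ioi, mem_Ioi] at hs
  have hlt := strictMonoOn_mul_cosh_div_sinh (mul_pos hs ha) (mul_pos hs hb)
    (mul_lt_mul_of_pos_left hab hs)
  simp only at hlt
  rw [div_lt_div_iff₀ (hsinh hs ha) (hsinh hs hb)] at hlt
  refine div_neg_of_neg_of_pos ?_ (pow_pos (hsinh hs hb) 2)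
  nlinarith

lemma sinh_mul_div_sinh_mul_lt {a b s : ℝ} (ha : 0 < a) (hab : a < b) (hs : 0 < s) :
    sinh (s * a) / sinh (s * b) < a / b := by
  have hb : 0 < b := ha.trans hab
  have hlt := strictMonoOn_sinh_div_self (mul_pos hs ha) (mul_pos hs hb)
    (mul_lt_mul_of_pos_left hab hs)
  simp only at hlt
  rw [div_lt_div_iff₀ (mul_pos hs ha) (mul_pos hs hb)] at hlt
  rw [div_lt_div_iff₀ (sinh_pos_iff.2 (mul_pos hs hb)) hb]
  nlinarith

lemma measurable_eta (θ₀ : ℝ) : Measurable (eta θ₀) :=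
  Measurable.ite (measurableSet_singleton 0) measurable_const (by fun_prop)

section Eta

variable {θ₀ : ℝ}

lemma eta_zero : eta θ₀ 0 = 1 / 2 - θ₀ / π := if_pos rfl

lemma eta_of_ne_zero {s : ℝ} (hs : s ≠ 0) :
    eta θ₀ s = sinh (s * (π - 2 * θ₀)) / sinh (s * π) / 2 := by
  rw [eta, if_neg hs, div_div, mul_comm (sinh (s * π))]

lemma eta_neg (s : ℝ) : eta θ₀ (-s) = eta θ₀ s := by
  rcases eq_or_ne s 0 with rfl | hs
  · rw [neg_zero]
  · rw [eta_of_ne_zero (neg_ne_zero.2 hs), eta_of_ne_zero hs, neg_mul, neg_mul, sinh_neg,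
      sinh_neg, neg_div_neg_eq]

lemma eta_abs (s : ℝ) : eta θ₀ |s| = eta θ₀ s := by
  rcases abs_choice s with h | h <;> rw [h]
  exact eta_neg s

lemma eta_pos (h1 : θ₀ < π / 2) (s : ℝ) : 0 < eta θ₀ s := by
  rcases eq_or_ne s 0 with rfl | hs
  · rw [eta_zero, sub_pos, div_lt_iff₀ pi_pos]
    linarith
  · rw [← eta_abs, eta_of_ne_zero (abs_ne_zero.2 hs)]
    have hs' := abs_pos.2 hs
    have : 0 < sinh (|s| * (π - 2 * θ₀)) := sinh_pos_iff.2 (mul_pos hs' (by linarith))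
    have : 0 < sinh (|s| * π) := sinh_pos_iff.2 (mul_pos hs' pi_pos)
    positivity

lemma half_sub_div_pi_pos (h1 : θ₀ < π / 2) : 0 < 1 / 2 - θ₀ / π :=
  eta_zero (θ₀ := θ₀) ▸ eta_pos h1 0

variable (h0 : 0 < θ₀) (h1 : θ₀ < π / 2)
include h0 h1

lemma eta_strictAntiOn : StrictAntiOn (eta θ₀) (Ici 0) := by
  have ha : 0 < π - 2 * θ₀ := by linarith
  have hab : π - 2 * θ₀ < π := by linarith
  intro s hs t ht hst
  have ht0 : 0 < t := lt_of_le_of_lt hs hst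
  rw [eta_of_ne_zero ht0.ne']
  rcases (mem_Ici.1 hs).eq_or_lt with rfl | hs0
  · rw [eta_zero, show 1 / 2 - θ₀ / π = (π - 2 * θ₀) / π / 2 by field_simp]
    exact div_lt_div_of_pos_right (sinh_mul_div_sinh_mul_lt ha hab ht0) two_pos
  · rw [eta_of_ne_zero hs0.ne']
    exact div_lt_div_of_pos_right
      (strictAntiOn_sinh_mul_div_sinh_mul ha hab hs0 ht0 hst) two_pos

lemma eta_le_eta_iff_abs_le {c s : ℝ} (hc : 0 ≤ c) : eta θ₀ c ≤ eta θ₀ s ↔ |s| ≤ c := by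
  rw [← eta_abs s]
  exact (eta_strictAntiOn h0 h1).le_iff_ge hc (abs_nonneg s)

lemma eta_le_eta_iff_le_abs {c s : ℝ} (hc : 0 ≤ c) : eta θ₀ s ≤ eta θ₀ c ↔ c ≤ |s| := by
  rw [← eta_abs s]
  exact (eta_strictAntiOn h0 h1).le_iff_ge (abs_nonneg s) hc

lemma eta_le (s : ℝ) : eta θ₀ s ≤ 1 / 2 - θ₀ / π := by
  rw [← eta_zero]
  exact (eta_le_eta_iff_le_abs h0 h1 le_rfl).2 (abs_nonneg s)

end Eta

section Sigma

variable {θ₀ : ℝ} (h0 : 0 < θ₀) (h1 : θ₀ < π / 2) {σ : ℝ → ℝ}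
  (hσ : ∀ t : ℝ, 0 < t → t ≤ 1 / 2 - θ₀ / π → 0 ≤ σ t ∧ eta θ₀ (σ t) = t)
include h0 h1 hσ

lemma sigma_half_sub_div_pi_eq_zero : σ (1 / 2 - θ₀ / π) = 0 := by
  obtain ⟨hσ0, hησ⟩ := hσ _ (half_sub_div_pi_pos h1) le_rfl
  exact (eta_strictAntiOn h0 h1).injOn hσ0 self_mem_Ici (hησ.trans eta_zero.symm)

lemma setOf_le_eta_eq_Icc {u : ℝ} (hu : 0 < u) (hub : u ≤ 1 / 2 - θ₀ / π) :
    {s | u ≤ eta θ₀ s} = Icc (-σ u) (σ u) := by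
  obtain ⟨hσ0, hησ⟩ := hσ u hu hub
  ext s
  rw [mem_ofPred_eq, mem_Icc, ← abs_le, ← eta_le_eta_iff_abs_le h0 h1 hσ0, hησ]

lemma setOf_eta_le_eq_compl_Ioo {u : ℝ} (hu : 0 < u) (hub : u ≤ 1 / 2 - θ₀ / π) :
    {s | eta θ₀ s ≤ u} = (Ioo (-σ u) (σ u))ᶜ := by
  obtain ⟨hσ0, hησ⟩ := hσ u hu hub
  ext s
  rw [mem_ofPred_eq, mem_compl_iff, mem_Ioo, ← abs_lt, not_lt,
    ← eta_le_eta_iff_le_abs h0 h1 hσ0, hησ]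

end Sigma

section FiniteMeasure

variable {μ : Measure ℝ} [IsFiniteMeasure μ]

lemma monotone_measureReal_Iic : Monotone fun t => μ.real (Iic t) :=
  fun _ _ h => measureReal_mono (Iic_subset_Iic.2 h)

lemma continuousWithinAt_measureReal_Iic (t : ℝ) :
    ContinuousWithinAt (fun t => μ.real (Iic t)) (Ici t) t := by
  rw [← continuousWithinAt_Ioi_iff_Ici]
  have hinter : ⋂ r > t, Iic r = Iic t := by
    ext x
    simp only [mem_iInter, mem_Iic]
    exact forall_gt_imp_ge_iff_le_of_dense
  have h := tendsto_measure_biInter_gt (μ := μ) (s := Iic) (a := t)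
    (fun _ _ => nullMeasurableSet_Iic) (fun _ _ _ hij => Iic_subset_Iic.2 hij)
    ⟨t + 1, by linarith, measure_ne_top _ _⟩
  rw [hinter] at h
  exact (ENNReal.tendsto_toReal (measure_ne_top _ _)).comp h

lemma StieltjesFunction.measure_eq_of_forall_eq_measureReal_Iic (S : StieltjesFunction ℝ)
    (hS : ∀ t, S t = μ.real (Iic t)) : S.measure = μ := by
  refine Measure.ext_of_Ioc _ _ fun a b hab => ?_
  rw [S.measure_Ioc, hS, hS, ← measureReal_sdiff (Iic_subset_Iic.2 hab.le) measurableSet_Iic,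
    Iic_sdiff_Iic, ofReal_measureReal]

end FiniteMeasure

section WithDensity

variable {α : Type*} [MeasurableSpace α] {μ : Measure α} {g : α → ℝ}

lemma measureReal_withDensity_ofReal [SFinite μ] (hg : Integrable g μ) (hg0 : 0 ≤ᵐ[μ] g)
    (A : Set α) : (μ.withDensity fun x => ENNReal.ofReal (g x)).real A = ∫ x in A, g x ∂μ := by
  rw [measureReal_def, withDensity_apply' _ A,
    ← ofReal_integral_eq_lintegral_ofReal hg.integrableOn (ae_restrict_of_ae hg0),
    ENNReal.toReal_ofReal (setIntegral_nonneg_of_ae_restrict (ae_restrict_of_ae hg0))]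

lemma integral_withDensity_ofReal (hg : AEMeasurable g μ) (hg0 : 0 ≤ᵐ[μ] g) (φ : α → ℝ) :
    ∫ x, φ x ∂(μ.withDensity fun x => ENNReal.ofReal (g x)) = ∫ x, g x * φ x ∂μ := by
  rw [integral_withDensity_eq_integral_toReal_smul₀ hg.ennreal_ofReal
    (ae_of_all _ fun _ => ENNReal.ofReal_lt_top)]
  refine integral_congr_ae (hg0.mono fun x hx => ?_)
  simp only [ENNReal.toReal_ofReal hx, smul_eq_mul]

end WithDensity

lemma measurable_p1 (θ₀ : ℝ) : Measurable (p1 θ₀) :=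
  Measurable.ite (measurableSet_singleton 0) measurable_const (by fun_prop)

lemma measurable_p2 (θ₀ : ℝ) : Measurable (p2 θ₀) := by
  unfold p2; fun_prop

lemma mul_sinh_mul_pos {s a : ℝ} (hs : s ≠ 0) (ha : 0 < a) : 0 < s * sinh (s * a) := by
  rcases hs.lt_or_gt with hs | hs
  · exact mul_pos_of_neg_of_neg hs (sinh_neg_iff.2 (mul_neg_of_neg_of_pos hs ha))
  · exact mul_pos hs (sinh_pos_iff.2 (mul_pos hs ha))

lemma sinh_mul_mul_sinh_mul_pos {s a b : ℝ} (hs : s ≠ 0) (ha : 0 < a) (hb : 0 < b) :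
    0 < sinh (s * a) * sinh (s * b) := by
  have := mul_pos (mul_sinh_mul_pos hs ha) (mul_sinh_mul_pos hs hb)
  have hs2 : 0 < s * s := mul_self_pos.2 hs
  nlinarith

lemma p1_pos {θ₀ : ℝ} (h0 : 0 < θ₀) (h1 : θ₀ < π / 2) (s : ℝ) : 0 < p1 θ₀ s := by
  have hπθ : 0 < π - θ₀ := by linarith
  unfold p1
  split_ifs with hs
  · exact div_pos (mul_pos h0 hπθ) pi_pos
  · exact div_pos (sinh_mul_mul_sinh_mul_pos hs h0 hπθ) (mul_sinh_mul_pos hs pi_pos)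

lemma p2_nonneg (θ₀ s : ℝ) : 0 ≤ p2 θ₀ s := by
  rcases eq_or_ne s 0 with rfl | hs
  · simp [p2]
  · exact div_nonneg (mul_pos (cosh_pos _) (cosh_pos _)).le (mul_sinh_mul_pos hs pi_pos).le

lemma integrable_mul_norm_sq_of_memLp_withDensity {α E : Type*} [MeasurableSpace α]
    [NormedAddCommGroup E] {μ : Measure α} {p : α → ℝ} (hp : Measurable p) (hp0 : ∀ x, 0 ≤ p x)
    {f : α → E} (hf : MemLp f 2 (μ.withDensity fun x => ENNReal.ofReal (p x))) :
    Integrable (fun x => p x * ‖f x‖ ^ 2) μ := by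
  have h := hf.integrable_norm_pow two_ne_zero
  rw [integrable_withDensity_iff hp.ennreal_ofReal (ae_of_all _ fun _ => ENNReal.ofReal_lt_top)]
    at h
  simpa only [ENNReal.toReal_ofReal (hp0 _), mul_comm] using h

noncomputable def energyMeasure (g : ℝ → ℝ) : Measure ℝ :=
  volume.withDensity fun s => ENNReal.ofReal (1 / 2 * g s)

section EnergyMeasure

variable {g : ℝ → ℝ}

lemma isFiniteMeasure_energyMeasure (hg : Integrable g) : IsFiniteMeasure (energyMeasure g) :=
  isFiniteMeasure_withDensity_ofReal (hg.const_mul _).hasFiniteIntegral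

variable (hg : Integrable g) (hg0 : 0 ≤ᵐ[volume] g)
include hg hg0

lemma measureReal_energyMeasure (A : Set ℝ) :
    (energyMeasure g).real A = 1 / 2 * ∫ s in A, g s := by
  rw [energyMeasure, measureReal_withDensity_ofReal (hg.const_mul _)
    (hg0.mono fun _ hs => mul_nonneg (by norm_num) hs), integral_const_mul]

lemma integral_energyMeasure (φ : ℝ → ℝ) :
    ∫ s, φ s ∂(energyMeasure g) = 1 / 2 * ∫ s, g s * φ s := by
  rw [energyMeasure, integral_withDensity_ofReal (hg.const_mul _).aemeasurable
    (hg0.mono fun _ hs => mul_nonneg (by norm_num) hs), ← integral_const_mul]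
  simp only [mul_assoc]

end EnergyMeasure

/-- With `gᵢ = pᵢ ‖fᵢ‖²`, the spectral measure `A ↦ ⟨f, 1_A(𝕂*) f⟩_{W*}` of `𝕂*` at `f`. -/
noncomputable def spectralMeasure (θ₀ : ℝ) (g₁ g₂ : ℝ → ℝ) : Measure ℝ :=
  (energyMeasure g₁).map (eta θ₀) + (energyMeasure g₂).map fun s => -eta θ₀ s

section SpectralMeasure

variable {θ₀ : ℝ} {g₁ g₂ : ℝ → ℝ} (hg₁ : Integrable g₁) (hg₂ : Integrable g₂)
include hg₁ hg₂

lemma isFiniteMeasure_spectralMeasure : IsFiniteMeasure (spectralMeasure θ₀ g₁ g₂) := by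
  have := isFiniteMeasure_energyMeasure hg₁
  have := isFiniteMeasure_energyMeasure hg₂
  unfold spectralMeasure
  infer_instance

variable (hg₁0 : 0 ≤ᵐ[volume] g₁) (hg₂0 : 0 ≤ᵐ[volume] g₂)
include hg₁0 hg₂0

lemma measureReal_spectralMeasure (A : Set ℝ) (hA : MeasurableSet A) :
    (spectralMeasure θ₀ g₁ g₂).real A =
      1 / 2 * (∫ s in eta θ₀ ⁻¹' A, g₁ s) + 1 / 2 * ∫ s in (fun s => -eta θ₀ s) ⁻¹' A, g₂ s := by
  have := isFiniteMeasure_energyMeasure hg₁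
  have := isFiniteMeasure_energyMeasure hg₂
  rw [spectralMeasure, measureReal_add_apply, map_measureReal_apply (measurable_eta θ₀) hA,
    map_measureReal_apply (f := fun s => -eta θ₀ s) (measurable_eta θ₀).neg hA,
    measureReal_energyMeasure hg₁ hg₁0, measureReal_energyMeasure hg₂ hg₂0]

lemma measureReal_Iic_spectralMeasure (t : ℝ) :
    (spectralMeasure θ₀ g₁ g₂).real (Iic t) =
      1 / 2 * (∫ s in {s | eta θ₀ s ≤ t}, g₁ s) + 1 / 2 * ∫ s in {s | -t ≤ eta θ₀ s}, g₂ s := by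
  have hpre : (fun s => -eta θ₀ s) ⁻¹' Iic t = {s | -t ≤ eta θ₀ s} := by
    ext s
    exact neg_le (a := eta θ₀ s)
  rw [measureReal_spectralMeasure hg₁ hg₂ hg₁0 hg₂0 _ measurableSet_Iic, hpre]
  rfl

lemma spectralMeasure_univ :
    spectralMeasure θ₀ g₁ g₂ univ = ENNReal.ofReal (1 / 2 * (∫ s, g₁ s) + 1 / 2 * ∫ s, g₂ s) := by
  have := isFiniteMeasure_spectralMeasure (θ₀ := θ₀) hg₁ hg₂
  rw [← ofReal_measureReal, measureReal_spectralMeasure hg₁ hg₂ hg₁0 hg₂0 _ MeasurableSet.univ,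
    preimage_univ, preimage_univ, setIntegral_univ, setIntegral_univ]

variable (h0 : 0 < θ₀) (h1 : θ₀ < π / 2)
include h0 h1

lemma integral_id_spectralMeasure :
    ∫ t, t ∂(spectralMeasure θ₀ g₁ g₂) = 1 / 2 * ∫ s, eta θ₀ s * (g₁ s - g₂ s) := by
  have := isFiniteMeasure_energyMeasure hg₁
  have := isFiniteMeasure_energyMeasure hg₂
  have hη : ∀ s, ‖eta θ₀ s‖ ≤ 1 / 2 - θ₀ / π := fun s => by
    rw [norm_of_nonneg (eta_pos h1 s).le]
    exact eta_le h0 h1 s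
  have hη_meas := (measurable_eta θ₀).aestronglyMeasurable (μ := volume)
  have hη_int : ∀ (ν : Measure ℝ) [IsFiniteMeasure ν], Integrable (eta θ₀) ν := fun _ _ =>
    .of_bound (measurable_eta θ₀).aestronglyMeasurable _ (ae_of_all _ hη)
  have hmap₁ : AEMeasurable (eta θ₀) (energyMeasure g₁) := (measurable_eta θ₀).aemeasurable
  have hmap₂ : AEMeasurable (fun s => -eta θ₀ s) (energyMeasure g₂) :=
    (measurable_eta θ₀).neg.aemeasurable
  rw [spectralMeasure, integral_add_measure, integral_map (f := fun t => t) hmap₁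
      aestronglyMeasurable_id, integral_map (f := fun t => t) hmap₂ aestronglyMeasurable_id,
    integral_energyMeasure hg₁ hg₁0, integral_energyMeasure hg₂ hg₂0, ← mul_add, ← integral_add]
  · congr 2 with s
    ring
  · exact hg₁.mul_bdd hη_meas (ae_of_all _ hη)
  · exact hg₂.mul_bdd hη_meas.neg (ae_of_all _ fun s => (norm_neg _).trans_le (hη s))
  · exact (integrable_map_measure aestronglyMeasurable_id hmap₁).2 (hη_int _)
  · exact (integrable_map_measure aestronglyMeasurable_id hmap₂).2 (hη_int _).neg

end SpectralMeasure

/-- With `gᵢ = pᵢ ‖fᵢ‖²`, `⟨f, E_t f⟩_{W*}` written out from the definition of `E_t` for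
`t ∈ [-b, b]`, extended by `0` below `-b` and by `‖f‖²_{W*}` above `b`. -/
noncomputable def spectralDistribution (θ₀ : ℝ) (σ g₁ g₂ : ℝ → ℝ) (t : ℝ) : ℝ :=
  if t < -(1 / 2 - θ₀ / π) then 0
  else if t < 0 then
    (1 / 2) * ∫ s in Set.Ioc (-(σ (-t))) (σ (-t)), g₂ s
  else if t = 0 then (1 / 2) * ∫ s, g₂ s
  else if t ≤ 1 / 2 - θ₀ / π then
    (1 / 2) * (∫ s, g₂ s) + (1 / 2) * ∫ s in (Set.Ioc (-(σ t)) (σ t))ᶜ, g₁ s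
  else (1 / 2) * (∫ s, g₁ s) + (1 / 2) * ∫ s, g₂ s

section SpectralDistribution

variable {θ₀ : ℝ} (h0 : 0 < θ₀) (h1 : θ₀ < π / 2) {σ : ℝ → ℝ}
  (hσ : ∀ t : ℝ, 0 < t → t ≤ 1 / 2 - θ₀ / π → 0 ≤ σ t ∧ eta θ₀ (σ t) = t) {g₁ g₂ : ℝ → ℝ}
include h0 h1 hσ

lemma spectralDistribution_of_le_neg {t : ℝ} (ht : t ≤ -(1 / 2 - θ₀ / π)) :
    spectralDistribution θ₀ σ g₁ g₂ t = 0 := by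
  have hb := half_sub_div_pi_pos h1
  rcases ht.lt_or_eq with ht | rfl
  · rw [spectralDistribution, if_pos ht]
  · rw [spectralDistribution, if_neg (lt_irrefl _), if_pos (neg_neg_of_pos hb), neg_neg,
      sigma_half_sub_div_pi_eq_zero h0 h1 hσ, neg_zero, Ioc_self, Measure.restrict_empty,
      integral_zero_measure, mul_zero]

lemma spectralDistribution_of_le {t : ℝ} (ht : 1 / 2 - θ₀ / π ≤ t) :
    spectralDistribution θ₀ σ g₁ g₂ t = 1 / 2 * (∫ s, g₁ s) + 1 / 2 * ∫ s, g₂ s := by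
  have hb := half_sub_div_pi_pos h1
  have ht0 : 0 < t := hb.trans_le ht
  rw [spectralDistribution, if_neg (by linarith), if_neg ht0.not_gt, if_neg ht0.ne']
  rcases ht.eq_or_lt with rfl | ht
  · rw [if_pos le_rfl, sigma_half_sub_div_pi_eq_zero h0 h1 hσ, neg_zero, Ioc_self, compl_empty,
      setIntegral_univ, add_comm]
  · rw [if_neg ht.not_ge]

lemma spectralDistribution_eq_measureReal_Iic (hg₁ : Integrable g₁) (hg₂ : Integrable g₂)
    (hg₁0 : 0 ≤ᵐ[volume] g₁) (hg₂0 : 0 ≤ᵐ[volume] g₂) (t : ℝ) :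
    spectralDistribution θ₀ σ g₁ g₂ t = (spectralMeasure θ₀ g₁ g₂).real (Iic t) := by
  have eta_le_empty : ∀ {u : ℝ}, u ≤ 0 → {s | eta θ₀ s ≤ u} = ∅ := fun hu =>
    eq_empty_of_forall_notMem fun s hs => (eta_pos h1 s).not_ge (le_trans hs hu)
  have eta_le_univ : ∀ {u : ℝ}, 1 / 2 - θ₀ / π ≤ u → {s | eta θ₀ s ≤ u} = univ := fun hu =>
    eq_univ_of_forall fun s => (eta_le h0 h1 s).trans hu
  have le_eta_empty : ∀ {u : ℝ}, 1 / 2 - θ₀ / π < u → {s | u ≤ eta θ₀ s} = ∅ := fun hu =>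
    eq_empty_of_forall_notMem fun s hs => (eta_le h0 h1 s).not_gt (hu.trans_le hs)
  have le_eta_univ : ∀ {u : ℝ}, u ≤ 0 → {s | u ≤ eta θ₀ s} = univ := fun hu =>
    eq_univ_of_forall fun s => hu.trans (eta_pos h1 s).le
  have hb := half_sub_div_pi_pos h1
  rw [measureReal_Iic_spectralMeasure hg₁ hg₂ hg₁0 hg₂0, spectralDistribution]
  split_ifs with hlow hneg hzero hup
  · rw [eta_le_empty (by linarith), le_eta_empty (by linarith)]
    simp
  · rw [eta_le_empty hneg.le, setOf_le_eta_eq_Icc h0 h1 hσ (neg_pos.2 hneg) (by linarith),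
      setIntegral_congr_set Ioc_ae_eq_Icc]
    simp
  · rw [hzero, eta_le_empty le_rfl, neg_zero, le_eta_univ le_rfl]
    simp
  · have htpos : 0 < t := lt_of_le_of_ne (not_lt.1 hneg) (Ne.symm hzero)
    rw [setOf_eta_le_eq_compl_Ioo h0 h1 hσ htpos hup, le_eta_univ (by linarith),
      setIntegral_congr_set Ioo_ae_eq_Ioc.compl, setIntegral_univ, add_comm]
  · rw [eta_le_univ (not_le.1 hup).le, le_eta_univ (by linarith), setIntegral_univ,
      setIntegral_univ]

end SpectralDistribution

/-- spectral resolution of `𝕂*`: for `f = (f₁,f₂) ∈ W*`, the function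
`F(t) = ⟨f, E_{min(max(t,−b),b)} f⟩_{W*}` is real-valued, nondecreasing and right-continuous,
vanishes on `(−∞,−b]` and equals `‖f‖²_{W*}` on `[b,∞)`; and its Lebesgue–Stieltjes measure
`μ_F` satisfies `∫ t dμ_F(t) = ⟨f, 𝕂* f⟩_{W*} = (1/2)∫ η (p₁|f₁|² − p₂|f₂|²)` and
`μ_F(ℝ) = ‖f‖²_{W*} = (1/2)∫ (p₁|f₁|² + p₂|f₂|²)`.
Here `σ : (0,b] → [0,∞)` is the inverse of `η|_{[0,∞)}`, `b = 1/2 − θ₀/π`, and `F` is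
written out explicitly from the definition of the spectral family `E_t`. -/
theorem statement13 (θ₀ : ℝ) (h0 : 0 < θ₀) (h1 : θ₀ < π / 2) (σ : ℝ → ℝ)
    (hσ : ∀ t : ℝ, 0 < t → t ≤ 1 / 2 - θ₀ / π → 0 ≤ σ t ∧ eta θ₀ (σ t) = t)
    (f₁ f₂ : ℝ → ℂ)
    (hf₁ : MemLp f₁ 2 (mu1 θ₀)) (hf₂ : MemLp f₂ 2 (mu2 θ₀))
    (F : ℝ → ℝ)
    (hF : ∀ t : ℝ, F t =
      if t < -(1 / 2 - θ₀ / π) then 0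
      else if t < 0 then
        (1 / 2) * ∫ s in Set.Ioc (-(σ (-t))) (σ (-t)), p2 θ₀ s * ‖f₂ s‖ ^ 2
      else if t = 0 then (1 / 2) * ∫ s, p2 θ₀ s * ‖f₂ s‖ ^ 2
      else if t ≤ 1 / 2 - θ₀ / π then
        (1 / 2) * (∫ s, p2 θ₀ s * ‖f₂ s‖ ^ 2)
          + (1 / 2) * ∫ s in (Set.Ioc (-(σ t)) (σ t))ᶜ, p1 θ₀ s * ‖f₁ s‖ ^ 2
      else (1 / 2) * (∫ s, p1 θ₀ s * ‖f₁ s‖ ^ 2) + (1 / 2) * ∫ s, p2 θ₀ s * ‖f₂ s‖ ^ 2) :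
    Monotone F ∧
    (∀ t : ℝ, ContinuousWithinAt F (Set.Ici t) t) ∧
    (∀ t : ℝ, t ≤ -(1 / 2 - θ₀ / π) → F t = 0) ∧
    (∀ t : ℝ, 1 / 2 - θ₀ / π ≤ t →
      F t = (1 / 2) * (∫ s, p1 θ₀ s * ‖f₁ s‖ ^ 2) + (1 / 2) * ∫ s, p2 θ₀ s * ‖f₂ s‖ ^ 2) ∧
    (∀ S : StieltjesFunction ℝ, (∀ t, S t = F t) →
      (∫ t, t ∂S.measure)
          = (1 / 2) * ∫ s, eta θ₀ s * (p1 θ₀ s * ‖f₁ s‖ ^ 2 - p2 θ₀ s * ‖f₂ s‖ ^ 2) ∧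
      S.measure Set.univ
          = ENNReal.ofReal
              ((1 / 2) * (∫ s, p1 θ₀ s * ‖f₁ s‖ ^ 2)
                + (1 / 2) * ∫ s, p2 θ₀ s * ‖f₂ s‖ ^ 2)) := by
  set g₁ : ℝ → ℝ := fun s => p1 θ₀ s * ‖f₁ s‖ ^ 2
  set g₂ : ℝ → ℝ := fun s => p2 θ₀ s * ‖f₂ s‖ ^ 2
  have hg₁ : Integrable g₁ := integrable_mul_norm_sq_of_memLp_withDensity (measurable_p1 θ₀)
    (fun s => (p1_pos h0 h1 s).le) hf₁
  have hg₂ : Integrable g₂ :=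
    integrable_mul_norm_sq_of_memLp_withDensity (measurable_p2 θ₀) (p2_nonneg θ₀) hf₂
  have hg₁0 : 0 ≤ᵐ[volume] g₁ := ae_of_all _ fun s => mul_nonneg (p1_pos h0 h1 s).le (sq_nonneg _)
  have hg₂0 : 0 ≤ᵐ[volume] g₂ := ae_of_all _ fun s => mul_nonneg (p2_nonneg θ₀ s) (sq_nonneg _)
  have := isFiniteMeasure_spectralMeasure (θ₀ := θ₀) hg₁ hg₂
  have hFμ : F = fun t => (spectralMeasure θ₀ g₁ g₂).real (Iic t) := funext fun t =>
    (hF t).trans (spectralDistribution_eq_measureReal_Iic h0 h1 hσ hg₁ hg₂ hg₁0 hg₂0 t)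
  refine ⟨hFμ ▸ monotone_measureReal_Iic, fun t => hFμ ▸ continuousWithinAt_measureReal_Iic t,
    fun t ht => (hF t).trans (spectralDistribution_of_le_neg h0 h1 hσ ht),
    fun t ht => (hF t).trans (spectralDistribution_of_le h0 h1 hσ ht), fun S hS => ?_⟩
  rw [S.measure_eq_of_forall_eq_measureReal_Iic fun t => (hS t).trans (congrFun hFμ t)]
  exact ⟨integral_id_spectralMeasure hg₁ hg₂ hg₁0 hg₂0 h0 h1,
    spectralMeasure_univ hg₁ hg₂ hg₁0 hg₂0⟩
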